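/- Let V ⊆ Z^d (d ≥ 2) be finite and face-connected, x ∈ B_out(V) an articulation cell with unique neighbor y in a component I of V \ {x} disjoint from B_out(V), and w ≠ y another neighbor of x. Let c be the cell face-adjacent to both the cells of y and w and distinct from x. Then c is empty, i.e., c ∉ V. -/

import Mathlib

/-- The grid graph on `ℤ^d`: cells are face-adjacent iff their centers are at distance 1. -/
def gridGraph (d : ℕ) : SimpleGraph (Fin d → ℤ) where
  Adj a b := (∑ i, |a i - b i|) = 1
  symm := by
    constructor
    intro a b h
    simpa [abs_sub_comm] using h
  loopless := by
    constructor
    intro a h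
    simp at h

/-- Reachability within a set `S` of cells via face-adjacency. -/
def ReachIn (d : ℕ) (S : Set (Fin d → ℤ)) (a b : Fin d → ℤ) : Prop :=
  Relation.ReflTransGen (fun x y => x ∈ S ∧ y ∈ S ∧ (gridGraph d).Adj x y) a b

/-- A set of cells is (face-)connected. -/
def IsConn (d : ℕ) (S : Set (Fin d → ℤ)) : Prop :=
  S.Nonempty ∧ ∀ a ∈ S, ∀ b ∈ S, ReachIn d S a b

/-- The outer boundary modules of `V`: cells of `V` face-adjacent to a cell of an
infinite face-connected component of the complement of `V`. -/
def Bout (d : ℕ) (V : Set (Fin d → ℤ)) : Set (Fin d → ℤ) :=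
  {v | v ∈ V ∧ ∃ c, c ∉ V ∧ (gridGraph d).Adj v c ∧
    Set.Infinite {b | ReachIn d Vᶜ c b}}

/-!
Let `e` be the empty cell next to `x` that witnesses `x ∈ B_out(V)`, and let `p` be a cell of `I`
adjacent to `x` such that the fourth cell `f = p + e - x` of the square on `x, p, e` is not `x`.
If `f ∈ V`, then `f ∈ I` (it is adjacent to `p`) and `f ∈ B_out(V)` (it is adjacent to `e`);
otherwise `f` lies in the infinite empty component of `e`, so `p ∈ B_out(V)`. Either way `I` meets
`B_out(V)`. If `c = y + w - x` were occupied we could take `p = y` unless `e` is opposite to `y`,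
and in that case `p = w`, which lies in `I` through `c`.
-/

section

variable {d : ℕ}

lemma gridGraph_adj_add_sub {x e : Fin d → ℤ} (h : (gridGraph d).Adj x e) (p : Fin d → ℤ) :
    (gridGraph d).Adj p (p + e - x) := by
  have hterm : ∀ i, |p i - (p + e - x) i| = |x i - e i| := fun i => by
    simp only [Pi.add_apply, Pi.sub_apply]
    congr 1
    ring
  show (∑ i, |p i - (p + e - x) i|) = 1
  exact (Finset.sum_congr rfl fun i _ => hterm i).trans h

lemma gridGraph_adj_add_sub' {x p : Fin d → ℤ} (h : (gridGraph d).Adj x p) (e : Fin d → ℤ) :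
    (gridGraph d).Adj e (p + e - x) := by
  rw [add_comm p e]
  exact gridGraph_adj_add_sub h e

lemma add_sub_ne_self {x p e : Fin d → ℤ} (h : e ≠ fun i => 2 * x i - p i) : p + e - x ≠ x :=
  fun hx => h <| funext fun i => by
    have := congrFun hx i
    simp only [Pi.add_apply, Pi.sub_apply] at this
    linarith

lemma infinite_reachIn_of_adj {S : Set (Fin d → ℤ)} {c c' : Fin d → ℤ} (hc : c ∈ S)
    (hc' : c' ∈ S) (h : (gridGraph d).Adj c' c) (hinf : {b | ReachIn d S c b}.Infinite) :
    {b | ReachIn d S c' b}.Infinite :=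
  hinf.mono fun _ hb => Relation.ReflTransGen.head ⟨hc', hc, h⟩ hb

lemma exists_reachIn_mem_bout_of_square {V : Set (Fin d → ℤ)} {x y p e : Fin d → ℤ}
    (hp : p ∈ V) (hxp : (gridGraph d).Adj x p) (hyp : ReachIn d (V \ {x}) y p)
    (he : e ∉ V) (hxe : (gridGraph d).Adj x e) (hinf : {b | ReachIn d Vᶜ e b}.Infinite)
    (hfx : p + e - x ≠ x) :
    ∃ b, ReachIn d (V \ {x}) y b ∧ b ∈ Bout d V := by
  have hpf := gridGraph_adj_add_sub hxe p
  have hef := gridGraph_adj_add_sub' hxp e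
  by_cases hf : p + e - x ∈ V
  · exact ⟨p + e - x, hyp.tail ⟨⟨hp, hxp.ne'⟩, ⟨hf, hfx⟩, hpf⟩, hf, e, he, hef.symm, hinf⟩
  · exact ⟨p, hyp, hp, p + e - x, hf, hpf, infinite_reachIn_of_adj he hf hef.symm hinf⟩

end

theorem stmt13_general (d : ℕ) (V : Set (Fin d → ℤ))
    (x : Fin d → ℤ) (hx : x ∈ Bout d V)
    (y : Fin d → ℤ) (hy : y ∈ V) (hadj : (gridGraph d).Adj x y)
    (hdisj : ∀ b, ReachIn d (V \ {x}) y b → b ∉ Bout d V)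
    (w : Fin d → ℤ) (hw : w ∈ V) (hwadj : (gridGraph d).Adj x w)
    (hwy : w ≠ y) (hperp : w ≠ fun i => 2 * x i - y i) :
    (fun i => y i + w i - x i) ∉ V := by
  show y + w - x ∉ V
  intro hc
  obtain ⟨-, e, he, hxe, hinf⟩ := hx
  obtain ⟨p, hp, hxp, hyp, hfx⟩ :
      ∃ p ∈ V, (gridGraph d).Adj x p ∧ ReachIn d (V \ {x}) y p ∧ p + e - x ≠ x := by
    by_cases hopp : e = fun i => 2 * x i - y i
    · have hcx : y + w - x ≠ x := add_sub_ne_self hperp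
      have hyw : ReachIn d (V \ {x}) y w :=
        (Relation.ReflTransGen.single
          ⟨⟨hy, hadj.ne'⟩, ⟨hc, hcx⟩, gridGraph_adj_add_sub hwadj y⟩).tail
          ⟨⟨hc, hcx⟩, ⟨hw, hwadj.ne'⟩, (gridGraph_adj_add_sub' hadj w).symm⟩
      refine ⟨w, hw, hwadj, hyw, fun h => hwy <| funext fun i => ?_⟩
      have h1 := congrFun h i
      have h2 := congrFun hopp i
      simp only [Pi.add_apply, Pi.sub_apply] at h1 h2
      linarith
    · exact ⟨y, hy, hadj, .refl, add_sub_ne_self hopp⟩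
  obtain ⟨b, hyb, hb⟩ := exists_reachIn_mem_bout_of_square hp hxp hyp he hxe hinf hfx
  exact hdisj b hyb hb

theorem stmt13 (d : ℕ) (hd : 2 ≤ d) (V : Set (Fin d → ℤ)) (hfin : V.Finite)
    (hconn : IsConn d V) (x : Fin d → ℤ) (hx : x ∈ Bout d V)
    (hart : ¬ IsConn d (V \ {x}))
    (y : Fin d → ℤ) (hy : y ∈ V) (hadj : (gridGraph d).Adj x y)
    (hdisj : ∀ b, ReachIn d (V \ {x}) y b → b ∉ Bout d V)
    (w : Fin d → ℤ) (hw : w ∈ V) (hwadj : (gridGraph d).Adj x w)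
    (hwy : w ≠ y) (hperp : w ≠ fun i => 2 * x i - y i) :
    (fun i => y i + w i - x i) ∉ V :=
  stmt13_general d V x hx y hy hadj hdisj w hw hwadj hwy hperp
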